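/- arXiv:1908.05051 — 3 statements merged into one kernel-verified Lean document; each statement's English description precedes it below -/
import Mathlib

section
/- Let (M, 𝒜) be a measurable space, let ν₁, ν₂, ν₃ be three finite measures on M, let k ∈ ℕ*, and let (U_i)_{i=1,…,K} be a collection of K pairwise disjoint measurable subsets of M with K ≥ 4k+1. Then there exist k+1 sets among this collection, say U_{i₁},…,U_{i_{k+1}}, such that each of them simultaneously satisfies ν₁(U_{i_j}) ≤ ν₁(M)/(k+1), ν₂(U_{i_j}) ≤ ν₂(M)/(k+1) and ν₃(U_{i_j}) ≤ ν₃(M)/(k+1). -/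
open MeasureTheory
open scoped ENNReal

lemma bad_card_le {M : Type*} [MeasurableSpace M] (ν : Measure M) [IsFiniteMeasure ν]
    (k K : ℕ) (U : Fin K → Set M) (hmeas : ∀ i, MeasurableSet (U i))
    (hdisj : Pairwise (Function.onFun Disjoint U)) :
    (Finset.univ.filter (fun i => ν Set.univ / (k + 1 : ℝ≥0∞) < ν (U i))).card ≤ k := by
  by_contra h
  push_neg at h
  obtain ⟨B, hBsub, hBcard⟩ := Finset.exists_subset_card_eq h
  have hBne : B.Nonempty := Finset.card_pos.mp (by omega)
  have hsum : ∑ i ∈ B, ν (U i) ≤ ν Set.univ := by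
    rw [← measure_biUnion_finset (fun i _ j _ hij => hdisj hij) (fun i _ => hmeas i)]
    exact measure_mono (Set.subset_univ _)
  have hlt : ∑ _i ∈ B, (ν Set.univ / (k + 1 : ℝ≥0∞)) < ∑ i ∈ B, ν (U i) := by
    exact ENNReal.sum_lt_sum_of_nonempty hBne fun i hi => (Finset.mem_filter.mp (hBsub hi)).2
  rw [Finset.sum_const, hBcard, nsmul_eq_mul] at hlt
  have hcancel : ((k : ℝ≥0∞) + 1) * (ν Set.univ / ((k : ℝ≥0∞) + 1)) = ν Set.univ :=
    ENNReal.mul_div_cancel' (by simp) (by simp)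
  push_cast at hlt
  rw [hcancel] at hlt
  exact hlt.not_ge hsum

/-- Three-measures selection lemma: given `K ≥ 4k+1` pairwise disjoint measurable
sets and three finite measures, one can select `k+1` of the sets each of which has
`νⱼ`-measure at most `νⱼ(M)/(k+1)` for `j = 1, 2, 3`. -/
theorem three_measures_selection {M : Type*} [MeasurableSpace M]
    (ν₁ ν₂ ν₃ : Measure M)
    [IsFiniteMeasure ν₁] [IsFiniteMeasure ν₂] [IsFiniteMeasure ν₃]
    (k K : ℕ) (hk : 1 ≤ k) (hK : 4 * k + 1 ≤ K)
    (U : Fin K → Set M) (hmeas : ∀ i, MeasurableSet (U i))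
    (hdisj : Pairwise (Function.onFun Disjoint U)) :
    ∃ s : Finset (Fin K), s.card = k + 1 ∧ ∀ i ∈ s,
      ν₁ (U i) ≤ ν₁ Set.univ / (k + 1 : ℝ≥0∞) ∧
      ν₂ (U i) ≤ ν₂ Set.univ / (k + 1 : ℝ≥0∞) ∧
      ν₃ (U i) ≤ ν₃ Set.univ / (k + 1 : ℝ≥0∞) := by
  set b₁ := Finset.univ.filter (fun i => ν₁ Set.univ / (k + 1 : ℝ≥0∞) < ν₁ (U i)) with hb₁
  set b₂ := Finset.univ.filter (fun i => ν₂ Set.univ / (k + 1 : ℝ≥0∞) < ν₂ (U i)) with hb₂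
  set b₃ := Finset.univ.filter (fun i => ν₃ Set.univ / (k + 1 : ℝ≥0∞) < ν₃ (U i)) with hb₃
  have h₁ : b₁.card ≤ k := bad_card_le ν₁ k K U hmeas hdisj
  have h₂ : b₂.card ≤ k := bad_card_le ν₂ k K U hmeas hdisj
  have h₃ : b₃.card ≤ k := bad_card_le ν₃ k K U hmeas hdisj
  set good := Finset.univ \ (b₁ ∪ b₂ ∪ b₃) with hgood
  have hcard : k + 1 ≤ good.card := by
    have hle : (b₁ ∪ b₂ ∪ b₃).card ≤ 3 * k := by
      calc (b₁ ∪ b₂ ∪ b₃).card ≤ (b₁ ∪ b₂).card + b₃.card := Finset.card_union_le _ _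
        _ ≤ b₁.card + b₂.card + b₃.card := by
            exact Nat.add_le_add_right (Finset.card_union_le _ _) _
        _ ≤ 3 * k := by omega
    have hle2 : Finset.univ.card - (b₁ ∪ b₂ ∪ b₃).card ≤ good.card :=
      Finset.le_card_sdiff _ _
    simp only [Finset.card_univ, Fintype.card_fin] at hle2
    omega
  obtain ⟨s, hssub, hscard⟩ := Finset.exists_subset_card_eq hcard
  refine ⟨s, hscard, fun i hi => ?_⟩
  have hig := hssub hi
  rw [hgood, Finset.mem_sdiff, Finset.mem_union, Finset.mem_union] at hig
  push_neg at hig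
  simp only [hb₁, hb₂, hb₃, Finset.mem_filter, Finset.mem_univ, true_and, not_lt] at hig
  tauto
end

section
/- Let α ∈ (0,1), λ ∈ ℝ, let ρ : (-1,1) → (0, ∞) be a positive C² function, and let u : (-1,1) → ℝ be a C³ function satisfying, for all x ∈ (-1,1), ρ(x)^{α−1} u''(x) + α ρ(x)^{α−2} ρ'(x) u'(x) + λ u(x) = 0. Then the function y = u' satisfies, for all x ∈ (-1,1), (ρ^{2α−1} y')'(x) + (λ − (α/(1−α)) (ρ^{α−1})''(x)) ρ(x)^α y(x) = 0, where (ρ^{α−1})'' denotes the second derivative of the function x ↦ ρ(x)^{α−1}. -/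
/-- ODE transformation: if `u` is `C³` and solves
`ρ^{α-1} u'' + α ρ^{α-2} ρ' u' + λ u = 0` on `(-1, 1)` with `ρ` a positive `C²`
density, then `y = u'` solves the Sturm–Liouville equation
`(ρ^{2α-1} y')' + (λ - (α/(1-α)) (ρ^{α-1})'') ρ^α y = 0` on `(-1, 1)`. -/
theorem ode_sturm_liouville_transformation (α lam : ℝ) (hα : α ∈ Set.Ioo (0 : ℝ) 1)
    (ρ u : ℝ → ℝ)
    (hρ : ContDiffOn ℝ 2 ρ (Set.Ioo (-1) 1))
    (hρpos : ∀ x ∈ Set.Ioo (-1 : ℝ) 1, 0 < ρ x)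
    (hu : ContDiffOn ℝ 3 u (Set.Ioo (-1) 1))
    (hode : ∀ x ∈ Set.Ioo (-1 : ℝ) 1,
      ρ x ^ (α - 1) * deriv (deriv u) x +
        α * ρ x ^ (α - 2) * deriv ρ x * deriv u x + lam * u x = 0) :
    ∀ x ∈ Set.Ioo (-1 : ℝ) 1,
      deriv (fun t => ρ t ^ (2 * α - 1) * deriv (deriv u) t) x +
        (lam - α / (1 - α) * deriv (deriv (fun t => ρ t ^ (α - 1))) x) *
          ρ x ^ α * deriv u x = 0 := by
  obtain ⟨hα0, hα1⟩ := hα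
  have hopen : IsOpen (Set.Ioo (-1:ℝ) 1) := isOpen_Ioo
  have hρ' : ContDiffOn ℝ 1 (deriv ρ) (Set.Ioo (-1) 1) :=
    hρ.deriv_of_isOpen hopen (by norm_num)
  have hu' : ContDiffOn ℝ 2 (deriv u) (Set.Ioo (-1) 1) :=
    hu.deriv_of_isOpen hopen (by norm_num)
  have hu'' : ContDiffOn ℝ 1 (deriv (deriv u)) (Set.Ioo (-1) 1) :=
    hu'.deriv_of_isOpen hopen (by norm_num)
  -- pointwise derivatives
  have hdρ : ∀ t ∈ Set.Ioo (-1:ℝ) 1, HasDerivAt ρ (deriv ρ t) t := fun t ht =>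
    ((hρ.contDiffAt (hopen.mem_nhds ht)).differentiableAt (by norm_num)).hasDerivAt
  have hdρ' : ∀ t ∈ Set.Ioo (-1:ℝ) 1, HasDerivAt (deriv ρ) (deriv (deriv ρ) t) t := fun t ht =>
    ((hρ'.contDiffAt (hopen.mem_nhds ht)).differentiableAt (by norm_num)).hasDerivAt
  have hdu : ∀ t ∈ Set.Ioo (-1:ℝ) 1, HasDerivAt u (deriv u t) t := fun t ht =>
    ((hu.contDiffAt (hopen.mem_nhds ht)).differentiableAt (by norm_num)).hasDerivAt
  have hdu' : ∀ t ∈ Set.Ioo (-1:ℝ) 1, HasDerivAt (deriv u) (deriv (deriv u) t) t := fun t ht =>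
    ((hu'.contDiffAt (hopen.mem_nhds ht)).differentiableAt (by norm_num)).hasDerivAt
  intro x hx
  have hρx : 0 < ρ x := hρpos x hx
  have hρxne : ρ x ≠ 0 := ne_of_gt hρx
  -- replace ρ^{2α-1} u'' by its ODE substitute on the interval
  have h1 : Set.EqOn (fun t => ρ t ^ (2 * α - 1) * deriv (deriv u) t)
      (fun t => -(α * ρ t ^ (2*α-2) * deriv ρ t * deriv u t + lam * ρ t ^ α * u t))
      (Set.Ioo (-1:ℝ) 1) := by
    intro t ht
    have hpt : 0 < ρ t := hρpos t ht
    have e1 : ρ t ^ (2*α-1) = ρ t ^ α * ρ t ^ (α-1) := by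
      rw [show 2*α-1 = α + (α-1) by ring, Real.rpow_add hpt]
    have e2 : ρ t ^ (2*α-2) = ρ t ^ α * ρ t ^ (α-2) := by
      rw [show 2*α-2 = α + (α-2) by ring, Real.rpow_add hpt]
    simp only [e1, e2]
    linear_combination (ρ t ^ α) * hode t ht
  have heq : deriv (fun t => ρ t ^ (2 * α - 1) * deriv (deriv u) t) x =
      deriv (fun t => -(α * ρ t ^ (2*α-2) * deriv ρ t * deriv u t + lam * ρ t ^ α * u t)) x :=
    Filter.EventuallyEq.deriv_eq (Filter.eventuallyEq_of_mem (hopen.mem_nhds hx) h1)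
  -- derivative of the substitute
  have hA : HasDerivAt (fun t => ρ t ^ (2*α-2))
      (deriv ρ x * (2*α-2) * ρ x ^ (2*α-2-1)) x :=
    (hdρ x hx).rpow_const (Or.inl hρxne)
  have hB : HasDerivAt (fun t => ρ t ^ α) (deriv ρ x * α * ρ x ^ (α-1)) x :=
    (hdρ x hx).rpow_const (Or.inl hρxne)
  have hg : HasDerivAt (fun t => -(α * ρ t ^ (2*α-2) * deriv ρ t * deriv u t + lam * ρ t ^ α * u t))
      (-(((α * (deriv ρ x * (2*α-2) * ρ x ^ (2*α-2-1)) * deriv ρ x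
            + α * ρ x ^ (2*α-2) * deriv (deriv ρ) x) * deriv u x
            + α * ρ x ^ (2*α-2) * deriv ρ x * deriv (deriv u) x)
        + ((lam * (deriv ρ x * α * ρ x ^ (α-1))) * u x + lam * ρ x ^ α * deriv u x))) x := by
    exact ((((hA.const_mul α).mul (hdρ' x hx)).mul (hdu' x hx)).add
      (((hB.const_mul lam).mul (hdu x hx)))).neg
  -- second derivative of ρ^{α-1}
  have h2 : Set.EqOn (deriv (fun t => ρ t ^ (α-1)))
      (fun t => deriv ρ t * (α-1) * ρ t ^ (α-1-1)) (Set.Ioo (-1:ℝ) 1) := by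
    intro t ht
    exact ((hdρ t ht).rpow_const (Or.inl (ne_of_gt (hρpos t ht)))).deriv
  have hC : HasDerivAt (fun t => ρ t ^ (α-1-1))
      (deriv ρ x * (α-1-1) * ρ x ^ (α-1-1-1)) x :=
    (hdρ x hx).rpow_const (Or.inl hρxne)
  have hD2 : deriv (deriv (fun t => ρ t ^ (α-1))) x =
      deriv (deriv ρ) x * (α-1) * ρ x ^ (α-1-1)
        + deriv ρ x * (α-1) * (deriv ρ x * (α-1-1) * ρ x ^ (α-1-1-1)) := by
    have := Filter.EventuallyEq.deriv_eq
      (Filter.eventuallyEq_of_mem (hopen.mem_nhds hx) h2)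
    rw [this]
    exact (((hdρ' x hx).mul_const (α-1)).mul hC).deriv
  rw [heq, hg.deriv, hD2]
  -- now pure algebra in rpow
  set r := ρ x with hr
  set A := ρ x ^ α with hA'
  have hApos : 0 < A := Real.rpow_pos_of_pos hρx α
  have hAne : A ≠ 0 := ne_of_gt hApos
  have er : ∀ k : ℕ, r ^ (α - k) = A / r ^ k := by
    intro k
    rw [Real.rpow_sub hρx, Real.rpow_natCast]
  have e2 : r ^ (2*α-2) = A * A / (r * r) := by
    rw [show 2*α-2 = α + (α - (2:ℕ)) by push_cast; ring, Real.rpow_add hρx, er 2]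
    ring
  have e3 : r ^ (2*α-2-1) = A * A / (r * r * r) := by
    rw [show 2*α-2-1 = α + (α - (3:ℕ)) by push_cast; ring, Real.rpow_add hρx, er 3]
    ring
  have e4 : r ^ (α-1) = A / r := by
    rw [show α - 1 = α - (1:ℕ) by norm_num, er 1]; ring_nf
  have e5 : r ^ (α-1-1) = A / (r * r) := by
    rw [show α-1-1 = α - (2:ℕ) by push_cast; ring, er 2]; ring_nf
  have e6 : r ^ (α-1-1-1) = A / (r * r * r) := by
    rw [show α-1-1-1 = α - (3:ℕ) by push_cast; ring, er 3]; ring_nf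
  -- the ODE at x
  have hodex := hode x hx
  rw [show α - 1 = α - (1:ℕ) by norm_num,
      show α - 2 = α - (2:ℕ) by push_cast; ring, er 1, er 2] at hodex
  have hy2 : deriv (deriv u) x =
      -(α * (A / (r^2)) * deriv ρ x * deriv u x + lam * u x) * r / A := by
    field_simp at hodex ⊢
    linarith [hodex]
  rw [e2, e3, e4, e5, e6, hy2]
  have h1α : (1:ℝ) - α ≠ 0 := by linarith
  have hrne : r ≠ 0 := hρxne
  field_simp
  ring
end

section
/- For positive continuous functions ρ, σ on [-1,1], define λ₁(ρ,σ) as the infimum of the Rayleigh quotients (∫_{-1}^{1} u'(t)² σ(t) dt) / (∫_{-1}^{1} u(t)² ρ(t) dt) over all C¹ functions u on [-1,1] with ∫_{-1}^{1} u(t) ρ(t) dt = 0 and u not identically zero. Then for every α ∈ (0,1) and every real number B, there exists a positive continuous function ρ on [-1,1] with ∫_{-1}^{1} ρ(t) dt = 2 such that λ₁(ρ, ρ^α) ≥ B. In other words, sup{ λ₁(ρ, ρ^α) : ρ positive continuous on [-1,1] with ∫_{-1}^{1} ρ dt = 2 } = +∞. -/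
/-!
If `∫ u ρ = 0`, then `∫ u² ρ ≤ ∫ (u - u 0)² ρ`, and Cauchy–Schwarz on `[0, x]` gives
`(u x - u 0)² ≤ (∫ u'² σ) |∫₀ˣ σ⁻¹|`. Hence `λ₁(ρ, σ) ≥ 1 / (2M)` as soon as
`ρ(x) |∫₀ˣ σ⁻¹| ≤ M` on `[-1, 1]`.

Take `ρ = c (1 + s²x²)^(-1/(1-α))` with `c` fixing the mass `2`, and `σ = ρ^α`. As `ρ` decreases
in `|x|`, `ρ(x) |∫₀ˣ ρ^(-α)| ≤ |x| ρ(x)^(1-α) = c^(1-α) |x| / (1 + s²x²) ≤ c^(1-α) / (2s)`.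
Since `ρ ≥ c 2^(-1/(1-α))` on `[-1/s, 1/s]`, the normalisation forces `c ≤ 2^(1/(1-α)) s`, so
`M = s^(-α)` works and `λ₁(ρ, ρ^α) ≥ s^α / 2 → ∞`.
-/

open MeasureTheory

/-- The first nonzero Neumann eigenvalue of `-(σ u')' = λ ρ u` on `(-1, 1)`:
the infimum of the Rayleigh quotients `∫ (u')² σ / ∫ u² ρ` over `C¹` functions
`u` on `[-1, 1]` with `∫ u ρ = 0` and `u` not identically zero. -/
noncomputable def lambda1 (ρ σ : ℝ → ℝ) : ℝ :=
  sInf {Q : ℝ | ∃ u u' : ℝ → ℝ,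
    (∀ t ∈ Set.Icc (-1 : ℝ) 1, HasDerivWithinAt u (u' t) (Set.Icc (-1) 1) t) ∧
    ContinuousOn u' (Set.Icc (-1) 1) ∧
    (∫ t in (-1 : ℝ)..1, u t * ρ t) = 0 ∧
    (∃ t ∈ Set.Icc (-1 : ℝ) 1, u t ≠ 0) ∧
    Q = (∫ t in (-1 : ℝ)..1, u' t ^ 2 * σ t) / ∫ t in (-1 : ℝ)..1, u t ^ 2 * ρ t}

open Set Filter

theorem sq_integral_le_integral_sq_mul_mul_integral_inv {g w : ℝ → ℝ} {a b : ℝ} (hab : a ≤ b)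
    (hg : IntervalIntegrable g volume a b)
    (hgw : IntervalIntegrable (fun t => g t ^ 2 * w t) volume a b)
    (hw : IntervalIntegrable (fun t => (w t)⁻¹) volume a b)
    (hw_pos : ∀ t ∈ Icc a b, 0 < w t) :
    (∫ t in a..b, g t) ^ 2 ≤ (∫ t in a..b, g t ^ 2 * w t) * ∫ t in a..b, (w t)⁻¹ := by
  -- the quadratic `l ↦ ∫ (l g w - 1)² / w` is nonnegative, so its discriminant is nonpositive
  have hquad : ∀ l : ℝ, 0 ≤ (∫ t in a..b, g t ^ 2 * w t) * (l * l) +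
      (-2 * ∫ t in a..b, g t) * l + ∫ t in a..b, (w t)⁻¹ := by
    intro l
    have hpt : ∀ t ∈ Icc a b, 0 ≤ l ^ 2 * (g t ^ 2 * w t) - 2 * l * g t + (w t)⁻¹ := by
      intro t ht
      have hwt := hw_pos t ht
      have hsq : l ^ 2 * (g t ^ 2 * w t) - 2 * l * g t + (w t)⁻¹ =
          (l * g t * w t - 1) ^ 2 / w t := by
        field_simp
        ring
      rw [hsq]
      exact div_nonneg (sq_nonneg _) hwt.le
    have hint := intervalIntegral.integral_nonneg (μ := volume) hab hpt
    rw [intervalIntegral.integral_add ((hgw.const_mul _).sub (hg.const_mul _)) hw,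
      intervalIntegral.integral_sub (hgw.const_mul _) (hg.const_mul _),
      intervalIntegral.integral_const_mul, intervalIntegral.integral_const_mul] at hint
    linarith
  have hdisc := discrim_le_zero hquad
  rw [discrim] at hdisc
  linarith

theorem sq_sub_le_integral_mul_abs_integral_inv {u u' σ : ℝ → ℝ} {p q a b : ℝ}
    (hu : ∀ t ∈ Icc p q, HasDerivWithinAt u (u' t) (Icc p q) t)
    (hu' : ContinuousOn u' (Icc p q)) (hσ : ContinuousOn σ (Icc p q))
    (hσ_pos : ∀ t ∈ Icc p q, 0 < σ t) (ha : a ∈ Icc p q) (hb : b ∈ Icc p q) :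
    (u b - u a) ^ 2 ≤ (∫ t in p..q, u' t ^ 2 * σ t) * |∫ t in a..b, (σ t)⁻¹| := by
  wlog hab : a ≤ b generalizing a b
  · rw [← neg_sub, neg_sq, intervalIntegral.integral_symm (f := fun t => (σ t)⁻¹) b a, abs_neg]
    exact this hb ha (le_of_not_ge hab)
  have hsub : Icc a b ⊆ Icc p q := Icc_subset_Icc ha.1 hb.2
  have hftc : ∫ t in a..b, u' t = u b - u a :=
    intervalIntegral.integral_eq_sub_of_hasDerivAt_of_le hab
      (fun t ht => (hu t (hsub ht)).continuousWithinAt.mono hsub)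
      (fun t ht => (hu t (hsub (Ioo_subset_Icc_self ht))).hasDerivAt
        (Icc_mem_nhds (ha.1.trans_lt ht.1) (ht.2.trans_le hb.2)))
      ((hu'.mono hsub).intervalIntegrable_of_Icc hab)
  have hσ_inv : ContinuousOn (fun t => (σ t)⁻¹) (Icc p q) :=
    hσ.inv₀ fun t ht => (hσ_pos t ht).ne'
  have hσ_inv_nonneg : 0 ≤ ∫ t in a..b, (σ t)⁻¹ :=
    intervalIntegral.integral_nonneg hab fun t ht => (inv_pos.2 (hσ_pos t (hsub ht))).le
  have hgw : ContinuousOn (fun t => u' t ^ 2 * σ t) (Icc p q) := (hu'.pow 2).mul hσ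
  calc (u b - u a) ^ 2 = (∫ t in a..b, u' t) ^ 2 := by rw [hftc]
    _ ≤ (∫ t in a..b, u' t ^ 2 * σ t) * ∫ t in a..b, (σ t)⁻¹ :=
        sq_integral_le_integral_sq_mul_mul_integral_inv hab
          ((hu'.mono hsub).intervalIntegrable_of_Icc hab)
          ((hgw.mono hsub).intervalIntegrable_of_Icc hab)
          ((hσ_inv.mono hsub).intervalIntegrable_of_Icc hab) fun t ht => hσ_pos t (hsub ht)
    _ ≤ (∫ t in p..q, u' t ^ 2 * σ t) * |∫ t in a..b, (σ t)⁻¹| := by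
        rw [abs_of_nonneg hσ_inv_nonneg]
        refine mul_le_mul_of_nonneg_right (intervalIntegral.integral_mono_interval ha.1 hab hb.2
          ?_ (hgw.intervalIntegrable_of_Icc (ha.1.trans ha.2))) hσ_inv_nonneg
        exact (ae_restrict_iff' measurableSet_Ioc).2 <| Eventually.of_forall fun t ht =>
          mul_nonneg (sq_nonneg _) (hσ_pos t (Ioc_subset_Icc_self ht)).le

theorem integral_sq_mul_le_integral_sub_sq_mul {u ρ : ℝ → ℝ} {a b : ℝ} (k : ℝ)
    (hu2 : IntervalIntegrable (fun t => u t ^ 2 * ρ t) volume a b)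
    (hu : IntervalIntegrable (fun t => u t * ρ t) volume a b)
    (hρ : IntervalIntegrable ρ volume a b)
    (horth : ∫ t in a..b, u t * ρ t = 0) (hmass : 0 ≤ ∫ t in a..b, ρ t) :
    ∫ t in a..b, u t ^ 2 * ρ t ≤ ∫ t in a..b, (u t - k) ^ 2 * ρ t := by
  have hexpand : ∀ t, (u t - k) ^ 2 * ρ t = u t ^ 2 * ρ t - 2 * k * (u t * ρ t) + k ^ 2 * ρ t :=
    fun t => by ring
  simp only [hexpand]
  rw [intervalIntegral.integral_add (hu2.sub (hu.const_mul _)) (hρ.const_mul _),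
    intervalIntegral.integral_sub hu2 (hu.const_mul _), intervalIntegral.integral_const_mul,
    intervalIntegral.integral_const_mul, horth]
  nlinarith [sq_nonneg k]

theorem integral_sq_mul_le_mul_integral_deriv_sq_mul {ρ σ u u' : ℝ → ℝ} {p q x₀ M : ℝ}
    (hx₀ : x₀ ∈ Icc p q) (hρ : ContinuousOn ρ (Icc p q)) (hρ_pos : ∀ t ∈ Icc p q, 0 < ρ t)
    (hσ : ContinuousOn σ (Icc p q)) (hσ_pos : ∀ t ∈ Icc p q, 0 < σ t)
    (hM : ∀ x ∈ Icc p q, ρ x * |∫ t in x₀..x, (σ t)⁻¹| ≤ M)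
    (hu : ∀ t ∈ Icc p q, HasDerivWithinAt u (u' t) (Icc p q) t)
    (hu' : ContinuousOn u' (Icc p q)) (horth : ∫ t in p..q, u t * ρ t = 0) :
    ∫ t in p..q, u t ^ 2 * ρ t ≤ (q - p) * M * ∫ t in p..q, u' t ^ 2 * σ t := by
  set A := ∫ t in p..q, u' t ^ 2 * σ t
  have hpq : p ≤ q := hx₀.1.trans hx₀.2
  have hA : 0 ≤ A := intervalIntegral.integral_nonneg hpq fun t ht =>
    mul_nonneg (sq_nonneg _) (hσ_pos t ht).le
  have hucont : ContinuousOn u (Icc p q) := fun t ht => (hu t ht).continuousWithinAt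
  have hosc : ∀ x ∈ Icc p q, (u x - u x₀) ^ 2 * ρ x ≤ A * M := fun x hx => calc
    (u x - u x₀) ^ 2 * ρ x ≤ A * |∫ t in x₀..x, (σ t)⁻¹| * ρ x :=
      mul_le_mul_of_nonneg_right
        (sq_sub_le_integral_mul_abs_integral_inv hu hu' hσ hσ_pos hx₀ hx) (hρ_pos x hx).le
    _ = A * (ρ x * |∫ t in x₀..x, (σ t)⁻¹|) := by ring
    _ ≤ A * M := mul_le_mul_of_nonneg_left (hM x hx) hA
  calc ∫ t in p..q, u t ^ 2 * ρ t ≤ ∫ t in p..q, (u t - u x₀) ^ 2 * ρ t :=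
        integral_sq_mul_le_integral_sub_sq_mul (u x₀)
          (((hucont.pow 2).mul hρ).intervalIntegrable_of_Icc hpq)
          ((hucont.mul hρ).intervalIntegrable_of_Icc hpq) (hρ.intervalIntegrable_of_Icc hpq) horth
          (intervalIntegral.integral_nonneg hpq fun t ht => (hρ_pos t ht).le)
    _ ≤ ∫ _ in p..q, A * M :=
        intervalIntegral.integral_mono_on hpq
          ((((hucont.sub continuousOn_const).pow 2).mul hρ).intervalIntegrable_of_Icc hpq)
          intervalIntegrable_const hosc
    _ = (q - p) * M * A := by
        rw [intervalIntegral.integral_const, smul_eq_mul]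
        ring

theorem inv_two_mul_le_lambda1 {ρ σ : ℝ → ℝ} {M : ℝ}
    (hρ : ContinuousOn ρ (Icc (-1) 1)) (hρ_pos : ∀ t ∈ Icc (-1 : ℝ) 1, 0 < ρ t)
    (hσ : ContinuousOn σ (Icc (-1) 1)) (hσ_pos : ∀ t ∈ Icc (-1 : ℝ) 1, 0 < σ t)
    (hM : ∀ x ∈ Icc (-1 : ℝ) 1, ρ x * |∫ t in (0 : ℝ)..x, (σ t)⁻¹| ≤ M) :
    (2 * M)⁻¹ ≤ lambda1 ρ σ := by
  have hmass : 0 < ∫ t in (-1 : ℝ)..1, ρ t :=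
    intervalIntegral.integral_pos (by norm_num) hρ
      (fun t ht => (hρ_pos t (Ioc_subset_Icc_self ht)).le) ⟨0, by norm_num, hρ_pos 0 (by norm_num)⟩
  apply le_csInf
  · -- `t ↦ t - k`, with `k` the barycentre of `ρ`, is admissible
    set k := (∫ t in (-1 : ℝ)..1, t * ρ t) / ∫ t in (-1 : ℝ)..1, ρ t
    refine ⟨_, fun t => t - k, fun _ => 1,
      fun t _ => ((hasDerivAt_id t).sub_const k).hasDerivWithinAt, continuousOn_const, ?_, ?_, rfl⟩
    · have hmoment : IntervalIntegrable (fun t => t * ρ t) volume (-1) 1 :=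
        (continuousOn_id.mul hρ).intervalIntegrable_of_Icc (by norm_num)
      simp only [sub_mul]
      rw [intervalIntegral.integral_sub hmoment
          ((hρ.intervalIntegrable_of_Icc (by norm_num)).const_mul k),
        intervalIntegral.integral_const_mul, sub_eq_zero]
      exact (div_mul_cancel₀ _ hmass.ne').symm
    · by_cases hk : k = 1
      · exact ⟨-1, by norm_num, by rw [hk]; norm_num⟩
      · exact ⟨1, by norm_num, sub_ne_zero.2 (Ne.symm hk)⟩
  · rintro Q ⟨u, u', hu, hu', horth, ⟨t₀, ht₀, hu₀⟩, rfl⟩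
    set A := ∫ t in (-1 : ℝ)..1, u' t ^ 2 * σ t
    set D := ∫ t in (-1 : ℝ)..1, u t ^ 2 * ρ t
    have hucont : ContinuousOn u (Icc (-1) 1) := fun t ht => (hu t ht).continuousWithinAt
    have hD : 0 < D := intervalIntegral.integral_pos (by norm_num) ((hucont.pow 2).mul hρ)
      (fun t ht => mul_nonneg (sq_nonneg _) (hρ_pos t (Ioc_subset_Icc_self ht)).le)
      ⟨t₀, ht₀, mul_pos (sq_pos_of_ne_zero hu₀) (hρ_pos t₀ ht₀)⟩
    have hA : 0 ≤ A := intervalIntegral.integral_nonneg (by norm_num) fun t ht =>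
      mul_nonneg (sq_nonneg _) (hσ_pos t ht).le
    have hDA : D ≤ 2 * M * A := by
      have := integral_sq_mul_le_mul_integral_deriv_sq_mul (by norm_num) hρ hρ_pos hσ hσ_pos hM
        hu hu' horth
      norm_num at this
      exact this
    have hM0 : 0 < M := by nlinarith
    rw [le_div_iff₀ hD]
    calc (2 * M)⁻¹ * D ≤ (2 * M)⁻¹ * (2 * M * A) := by gcongr
      _ = A := by field_simp

theorem abs_integral_inv_le_of_abs_le {σ : ℝ → ℝ} {x : ℝ} (hx : 0 < σ x)
    (hσ : ∀ t, |t| ≤ |x| → σ x ≤ σ t) : |∫ t in (0 : ℝ)..x, (σ t)⁻¹| ≤ |x| * (σ x)⁻¹ := by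
  have hbound : ∀ t ∈ uIoc 0 x, ‖(σ t)⁻¹‖ ≤ (σ x)⁻¹ := by
    intro t ht
    have htx : |t| ≤ |x| := by
      rcases Set.mem_uIoc.1 ht with ⟨h0t, htx⟩ | ⟨hxt, ht0⟩
      · exact abs_le_abs_of_nonneg h0t.le htx
      · exact abs_le_abs_of_nonpos ht0 hxt.le
    rw [Real.norm_eq_abs, abs_of_pos (inv_pos.2 (hx.trans_le (hσ t htx)))]
    exact inv_anti₀ hx (hσ t htx)
  simpa [mul_comm] using intervalIntegral.norm_integral_le_of_norm_le_const hbound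

/-- The paper's `ρ_m` with `m = s²`; its constant prefactor is absorbed by the normalisation. -/
noncomputable def peakProfile (α s t : ℝ) : ℝ := (1 + (s * t) ^ 2) ^ (-(1 - α)⁻¹)

noncomputable def peakDensity (α s t : ℝ) : ℝ :=
  2 / (∫ τ in (-1 : ℝ)..1, peakProfile α s τ) * peakProfile α s t

section PeakDensity

variable {α s : ℝ}

theorem peakProfile_pos (α s t : ℝ) : 0 < peakProfile α s t :=
  Real.rpow_pos_of_pos (by positivity) _

theorem continuous_peakProfile (α s : ℝ) : Continuous (peakProfile α s) :=
  (by fun_prop : Continuous fun t => 1 + (s * t) ^ 2).rpow_const fun _ => Or.inl (by positivity)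

theorem peakProfile_le_peakProfile (hα : α < 1) {t x : ℝ} (h : |t| ≤ |x|) :
    peakProfile α s x ≤ peakProfile α s t := by
  have hsq : (s * t) ^ 2 ≤ (s * x) ^ 2 := by
    rw [mul_pow, mul_pow]
    exact mul_le_mul_of_nonneg_left (sq_le_sq.2 h) (sq_nonneg s)
  exact Real.rpow_le_rpow_of_nonpos (by positivity) (by linarith)
    (neg_nonpos.2 (inv_nonneg.2 (sub_nonneg.2 hα.le)))

theorem peakProfile_rpow_one_sub (hα : α < 1) (t : ℝ) :
    peakProfile α s t ^ (1 - α) = (1 + (s * t) ^ 2)⁻¹ := by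
  rw [peakProfile, ← Real.rpow_mul (by positivity), neg_mul,
    inv_mul_cancel₀ (sub_ne_zero.2 hα.ne'), Real.rpow_neg_one]

theorem integral_peakProfile_pos (α s : ℝ) : 0 < ∫ t in (-1 : ℝ)..1, peakProfile α s t :=
  intervalIntegral.intervalIntegral_pos_of_pos ((continuous_peakProfile α s).intervalIntegrable _ _)
    (peakProfile_pos α s) (by norm_num)

/-- On `[-1/s, 1/s]` the profile is at least `2 ^ (-(1 - α)⁻¹)`. -/
theorem two_div_integral_peakProfile_le (hα : α < 1) (hs : 1 ≤ s) :
    2 / (∫ t in (-1 : ℝ)..1, peakProfile α s t) ≤ 2 ^ (1 - α)⁻¹ * s := by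
  have hs0 : 0 < s := by linarith
  have hs1 : s⁻¹ ≤ 1 := inv_le_one_of_one_le₀ hs
  have hint := (continuous_peakProfile α s).intervalIntegrable (μ := volume)
  have hlow : ∀ t ∈ Icc (-s⁻¹) s⁻¹, (2 : ℝ) ^ (-(1 - α)⁻¹) ≤ peakProfile α s t := by
    intro t ht
    have hst : (s * t) ^ 2 ≤ 1 := by
      rw [sq_le_one_iff_abs_le_one, abs_mul, abs_of_pos hs0, ← le_div_iff₀' hs0, one_div]
      exact abs_le.2 ht
    exact Real.rpow_le_rpow_of_nonpos (by positivity) (by linarith)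
      (neg_nonpos.2 (inv_nonneg.2 (sub_nonneg.2 hα.le)))
  have hN : 2 / s * 2 ^ (-(1 - α)⁻¹) ≤ ∫ t in (-1 : ℝ)..1, peakProfile α s t := calc
    2 / s * 2 ^ (-(1 - α)⁻¹) = ∫ _ in -s⁻¹..s⁻¹, (2 : ℝ) ^ (-(1 - α)⁻¹) := by
        rw [intervalIntegral.integral_const, smul_eq_mul]
        ring
    _ ≤ ∫ t in -s⁻¹..s⁻¹, peakProfile α s t :=
        intervalIntegral.integral_mono_on (by linarith [inv_pos.2 hs0]) intervalIntegrable_const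
          (hint _ _) hlow
    _ ≤ ∫ t in (-1 : ℝ)..1, peakProfile α s t :=
        intervalIntegral.integral_mono_interval (by linarith) (by linarith [inv_pos.2 hs0]) hs1
          (ae_of_all _ fun t => (peakProfile_pos α s t).le) (hint _ _)
  calc 2 / (∫ t in (-1 : ℝ)..1, peakProfile α s t) ≤ 2 / (2 / s * 2 ^ (-(1 - α)⁻¹)) :=
        div_le_div_of_nonneg_left zero_le_two (by positivity) hN
    _ = 2 ^ (1 - α)⁻¹ * s := by
        rw [Real.rpow_neg zero_le_two]
        field_simp

theorem peakDensity_pos (α s t : ℝ) : 0 < peakDensity α s t :=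
  mul_pos (div_pos two_pos (integral_peakProfile_pos α s)) (peakProfile_pos α s t)

theorem continuous_peakDensity (α s : ℝ) : Continuous (peakDensity α s) :=
  continuous_const.mul (continuous_peakProfile α s)

theorem integral_peakDensity (α s : ℝ) : ∫ t in (-1 : ℝ)..1, peakDensity α s t = 2 := by
  simp only [peakDensity]
  rw [intervalIntegral.integral_const_mul, div_mul_cancel₀ _ (integral_peakProfile_pos α s).ne']

theorem peakDensity_le_peakDensity (hα : α < 1) {t x : ℝ} (h : |t| ≤ |x|) :
    peakDensity α s x ≤ peakDensity α s t :=
  mul_le_mul_of_nonneg_left (peakProfile_le_peakProfile hα h)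
    (div_pos two_pos (integral_peakProfile_pos α s)).le

theorem peakDensity_rpow_one_sub_le (hα : α < 1) (hs : 1 ≤ s) (x : ℝ) :
    peakDensity α s x ^ (1 - α) ≤ 2 * s ^ (1 - α) / (1 + (s * x) ^ 2) := by
  have hc := (div_pos two_pos (integral_peakProfile_pos α s)).le
  have hβ : 0 ≤ 1 - α := sub_nonneg.2 hα.le
  have hc_rpow : (2 / ∫ t in (-1 : ℝ)..1, peakProfile α s t) ^ (1 - α) ≤ 2 * s ^ (1 - α) := calc
    _ ≤ (2 ^ (1 - α)⁻¹ * s) ^ (1 - α) :=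
        Real.rpow_le_rpow hc (two_div_integral_peakProfile_le hα hs) hβ
    _ = 2 * s ^ (1 - α) := by
        rw [Real.mul_rpow (by positivity) (by linarith), ← Real.rpow_mul zero_le_two,
          inv_mul_cancel₀ (sub_ne_zero.2 hα.ne'), Real.rpow_one]
  rw [peakDensity, Real.mul_rpow hc (peakProfile_pos α s x).le, peakProfile_rpow_one_sub hα,
    ← div_eq_mul_inv]
  gcongr

theorem peakDensity_mul_abs_integral_le (hα : α ∈ Ioo 0 1) (hs : 1 ≤ s) (x : ℝ) :
    peakDensity α s x * |∫ t in (0 : ℝ)..x, (peakDensity α s t ^ α)⁻¹| ≤ s ^ (-α) := by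
  have hρx := peakDensity_pos α s x
  have hs0 : 0 < s := by linarith
  have hdecay : 2 * s * |x| ≤ 1 + (s * x) ^ 2 := by
    have habs : (s * x) ^ 2 = (s * |x|) ^ 2 := by rw [mul_pow, mul_pow, sq_abs]
    nlinarith [sq_nonneg (s * |x| - 1)]
  calc peakDensity α s x * |∫ t in (0 : ℝ)..x, (peakDensity α s t ^ α)⁻¹|
      ≤ peakDensity α s x * (|x| * (peakDensity α s x ^ α)⁻¹) := by
        refine mul_le_mul_of_nonneg_left (abs_integral_inv_le_of_abs_le
          (Real.rpow_pos_of_pos hρx α) fun t ht => ?_) hρx.le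
        exact Real.rpow_le_rpow hρx.le (peakDensity_le_peakDensity hα.2 ht) hα.1.le
    _ = |x| * peakDensity α s x ^ (1 - α) := by
        rw [Real.rpow_sub hρx, Real.rpow_one]
        ring
    _ ≤ |x| * (2 * s ^ (1 - α) / (1 + (s * x) ^ 2)) := by
        gcongr
        exact peakDensity_rpow_one_sub_le hα.2 hs x
    _ = 2 * s * |x| / (1 + (s * x) ^ 2) * s ^ (-α) := by
        rw [sub_eq_add_neg, Real.rpow_add hs0, Real.rpow_one]
        ring
    _ ≤ s ^ (-α) := by
        refine mul_le_of_le_one_left (by positivity) ?_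
        exact div_le_one_of_le₀ hdecay (by positivity)

end PeakDensity

/-- Proposition 3.3 of the paper: in dimension one, for every `α ∈ (0,1)` the
supremum of `λ₁(ρ, ρ^α)` over mass-normalised positive continuous densities
(`∫_{-1}^{1} ρ = 2`) is infinite. -/
theorem lambda1_sup_infinite (α : ℝ) (hα : α ∈ Set.Ioo (0 : ℝ) 1) (B : ℝ) :
    ∃ ρ : ℝ → ℝ, ContinuousOn ρ (Set.Icc (-1) 1) ∧
      (∀ t ∈ Set.Icc (-1 : ℝ) 1, 0 < ρ t) ∧
      (∫ t in (-1 : ℝ)..1, ρ t) = 2 ∧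
      B ≤ lambda1 ρ (fun t => ρ t ^ α) := by
  obtain ⟨s, hsB, hs⟩ := (((tendsto_rpow_atTop hα.1).eventually_ge_atTop (2 * B)).and
    (eventually_ge_atTop 1)).exists
  have hρ : ContinuousOn (peakDensity α s) (Icc (-1) 1) := (continuous_peakDensity α s).continuousOn
  have hρ_pos : ∀ t ∈ Icc (-1 : ℝ) 1, 0 < peakDensity α s t := fun t _ => peakDensity_pos α s t
  refine ⟨peakDensity α s, hρ, hρ_pos, integral_peakDensity α s, ?_⟩
  calc B ≤ (2 * s ^ (-α))⁻¹ := by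
        rw [Real.rpow_neg (by linarith), mul_inv, inv_inv]
        linarith
    _ ≤ lambda1 (peakDensity α s) (fun t => peakDensity α s t ^ α) :=
        inv_two_mul_le_lambda1 hρ hρ_pos (hρ.rpow_const fun t ht => Or.inl (hρ_pos t ht).ne')
          (fun t ht => Real.rpow_pos_of_pos (hρ_pos t ht) α)
          fun x _ => peakDensity_mul_abs_integral_le hα hs x
end
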